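/- Let A ∈ ℂ^{n×n}, let p be the largest integer such that the arithmetic mean of the p largest eigenvalues of the Hermitian part H = (A+A*)/2 is nonnegative (p = 0 if the largest eigenvalue of H is negative). Then for any V ∈ ℂ^{n×k} with orthonormal columns, the number of eigenvalues of V*AV (with multiplicity) having nonnegative real part is at most p. -/

import Mathlib

open Matrix Polynomial

lemma map_C_one {k : ℕ} : ((1 : Matrix (Fin k) (Fin k) ℂ).map (C : ℂ → ℂ[X])) = 1 := by
  ext i j; simp [Matrix.map_apply, Matrix.one_apply, apply_ite C]

lemma charpoly_unitary_conj {k : ℕ} (U B : Matrix (Fin k) (Fin k) ℂ) (hU : Uᴴ * U = 1) :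
    (Uᴴ * B * U).charpoly = B.charpoly := by
  have key : charmatrix (Uᴴ * B * U) = (Uᴴ.map C) * charmatrix B * (U.map C) := by
    have h1 : (Uᴴ.map C) * (U.map C) = 1 := by
      rw [← Matrix.map_mul (f := (C : ℂ →+* ℂ[X])), hU]; exact map_C_one
    unfold charmatrix
    rw [Matrix.mul_sub, Matrix.sub_mul]
    congr 1
    · rw [Matrix.scalar_apply, ← smul_one_eq_diagonal, Matrix.mul_smul, Matrix.smul_mul,
        Matrix.mul_one, h1]
    · simp only [RingHom.mapMatrix_apply]
      rw [← Matrix.map_mul, ← Matrix.map_mul]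
  have hdet : (Uᴴ.map C).det * (U.map C).det = 1 := by
    rw [← det_mul, ← Matrix.map_mul (f := (C : ℂ →+* ℂ[X])), hU, map_C_one, det_one]
  unfold Matrix.charpoly
  rw [key, det_mul, det_mul]
  calc (Uᴴ.map C).det * (charmatrix B).det * (U.map C).det
      = ((Uᴴ.map C).det * (U.map C).det) * (charmatrix B).det := by ring
    _ = (charmatrix B).det := by rw [hdet, one_mul]

lemma exists_eigenvector_of_root {k : ℕ} (B : Matrix (Fin k) (Fin k) ℂ) (θ : ℂ)
    (hθ : θ ∈ B.charpoly.roots) : ∃ v : Fin k → ℂ, v ≠ 0 ∧ B *ᵥ v = θ • v := by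
  have hroot : (B.charpoly).IsRoot θ := isRoot_of_mem_roots hθ
  have hdet : (θ • (1 : Matrix (Fin k) (Fin k) ℂ) - B).det = 0 := by
    have : Polynomial.eval θ B.charpoly = ((charmatrix B).map (Polynomial.evalRingHom θ)).det := by
      unfold Matrix.charpoly
      rw [show Polynomial.eval θ (charmatrix B).det = (Polynomial.evalRingHom θ) (charmatrix B).det from rfl, RingHom.map_det]
      rfl
    have h2 : (charmatrix B).map (Polynomial.evalRingHom θ) = θ • 1 - B := by
      apply Matrix.ext; intro i j
      by_cases h : i = j
      · subst h; simp [charmatrix_apply_eq]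
      · rw [Matrix.map_apply, charmatrix_apply_ne _ _ _ h]
        simp [Matrix.one_apply_ne h, Matrix.smul_apply]
    rw [← h2, ← this]
    exact hroot
  obtain ⟨v, hv0, hv⟩ := (Matrix.exists_mulVec_eq_zero_iff).mpr hdet
  refine ⟨v, hv0, ?_⟩
  have := hv
  rw [Matrix.sub_mulVec, sub_eq_zero] at this
  rw [← this, Matrix.smul_mulVec, Matrix.one_mulVec]

lemma exists_unitary_col_zero {j : ℕ} (v : EuclideanSpace ℂ (Fin (j+1))) (hv : ‖v‖ = 1) :
    ∃ U : Matrix (Fin (j+1)) (Fin (j+1)) ℂ, Uᴴ * U = 1 ∧ (∀ a, U a 0 = v a) ∧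
      (Uᴴ *ᵥ (v : Fin (j+1) → ℂ)) = fun i => if i = 0 then 1 else 0 := by
  have hcard : Module.finrank ℂ (EuclideanSpace ℂ (Fin (j+1))) = Fintype.card (Fin (j+1)) := by
    simp [finrank_euclideanSpace]
  have horth : Orthonormal ℂ (({0} : Set (Fin (j+1))).restrict (fun _ => v)) := by
    constructor
    · intro i; exact hv
    · intro a b hab
      exfalso; exact hab (Subtype.ext (by rw [a.2, b.2]))
  obtain ⟨b, hb⟩ := horth.exists_orthonormalBasis_extension_of_card_eq hcard
  have hb0 : b 0 = v := hb 0 rfl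
  refine ⟨Matrix.of (fun a i => b i a), ?_, fun a => by simp [hb0], ?_⟩
  · apply Matrix.ext; intro i l
    have := orthonormal_iff_ite.mp b.orthonormal i l
    simp only [Matrix.mul_apply, Matrix.conjTranspose_apply, Matrix.of_apply, Matrix.one_apply]
    rw [← this, EuclideanSpace.inner_eq_star_dotProduct]
    simp [dotProduct, mul_comm, star_apply]
  · funext i
    have := orthonormal_iff_ite.mp b.orthonormal i 0
    simp only [Matrix.mulVec, Matrix.conjTranspose_apply, Matrix.of_apply, dotProduct]
    rw [← hb0, ← this, EuclideanSpace.inner_eq_star_dotProduct]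
    simp [dotProduct, star_apply, mul_comm]

lemma key_lemma (k : ℕ) : ∀ (B : Matrix (Fin k) (Fin k) ℂ) (m : ℕ),
    (B.charpoly.roots.filter fun z : ℂ => 0 ≤ z.re).card = m →
    ∃ W : Matrix (Fin k) (Fin m) ℂ, Wᴴ * W = 1 ∧ 0 ≤ (Matrix.trace (Wᴴ * B * W)).re := by
  induction k with
  | zero =>
    intro B m hm
    have hm0 : m = 0 := by
      rw [← hm]
      have h1 : B.charpoly = 1 :=
        (Polynomial.Monic.natDegree_eq_zero (B.charpoly_monic)).mp
          (by rw [B.charpoly_natDegree_eq_dim]; simp)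
      simp [h1]
    subst hm0
    exact ⟨0, Subsingleton.elim _ _, by simp [Matrix.trace]⟩
  | succ j ih =>
    intro B m hm
    rcases Nat.eq_zero_or_pos m with h0 | hpos
    · subst h0
      exact ⟨0, Subsingleton.elim _ _, by simp [Matrix.trace]⟩
    -- find an unstable eigenvalue
    have hne : (B.charpoly.roots.filter fun z : ℂ => 0 ≤ z.re) ≠ 0 := by
      intro h; rw [h] at hm; simp at hm; omega
    obtain ⟨θ, hθmem⟩ := Multiset.exists_mem_of_ne_zero hne
    rw [Multiset.mem_filter] at hθmem
    obtain ⟨hθroot, hθre⟩ := hθmem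
    obtain ⟨v, hv0, hveig⟩ := exists_eigenvector_of_root B θ hθroot
    -- normalize
    set v' : EuclideanSpace ℂ (Fin (j+1)) := WithLp.toLp 2 v with hv'
    have hv'0 : v' ≠ 0 := fun h => hv0 (congrArg WithLp.ofLp h)
    have hnv : ‖v'‖ ≠ 0 := norm_ne_zero_iff.mpr hv'0
    set c : ℝ := ‖v'‖⁻¹ with hc
    set u : EuclideanSpace ℂ (Fin (j+1)) := (c : ℂ) • v' with hu
    have hnu : ‖u‖ = 1 := by
      rw [hu, norm_smul]
      simp [hc, abs_of_nonneg (inv_nonneg.mpr (norm_nonneg v')), inv_mul_cancel₀ hnv]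
    have hueig : B *ᵥ (u : Fin (j+1) → ℂ) = θ • (u : Fin (j+1) → ℂ) := by
      show B *ᵥ ((c:ℂ) • v) = θ • ((c:ℂ) • v)
      rw [Matrix.mulVec_smul, hveig, smul_comm]
    obtain ⟨U, hUU, hUcol, hUv⟩ := exists_unitary_col_zero u hnu
    set B₁ := Uᴴ * B * U with hB₁def
    have hchar₁ : B₁.charpoly = B.charpoly := charpoly_unitary_conj U B hUU
    -- first column of B₁
    have hB₁col : ∀ i, B₁ i 0 = θ * (if i = 0 then 1 else 0) := by
      intro i
      have h1 : B₁ i 0 = ((Uᴴ * B) *ᵥ (u : Fin (j+1) → ℂ)) i := by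
        simp only [hB₁def, Matrix.mul_apply, Matrix.mulVec, dotProduct]
        congr 1; funext b; rw [hUcol b]
      rw [h1, ← Matrix.mulVec_mulVec, hueig, Matrix.mulVec_smul, hUv]
      simp [Pi.smul_apply, smul_eq_mul]
    set B' := B₁.submatrix Fin.succ Fin.succ with hB'def
    have hfact : B₁.charpoly = (X - C θ) * B'.charpoly := by
      unfold Matrix.charpoly
      rw [Matrix.det_succ_column_zero]
      have hterm : ∀ i ∈ Finset.univ, i ≠ (0 : Fin (j+1)) →
          (-1 : ℂ[X]) ^ (i : ℕ) * (charmatrix B₁ i 0) *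
            ((charmatrix B₁).submatrix i.succAbove Fin.succ).det = 0 := by
        intro i _ hi
        rw [charmatrix_apply_ne _ _ _ hi, hB₁col i, if_neg hi]
        simp
      rw [Finset.sum_eq_single 0 hterm (by simp)]
      have hsub : (charmatrix B₁).submatrix (Fin.succAbove 0) Fin.succ = charmatrix B' := by
        rw [Fin.succAbove_zero]
        apply Matrix.ext; intro a b
        by_cases h : a = b
        · subst h; simp [charmatrix_apply_eq, hB'def, Matrix.submatrix_apply]
        · rw [Matrix.submatrix_apply, charmatrix_apply_ne _ _ _ (by simpa using h),
            charmatrix_apply_ne _ _ _ h]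
          simp [hB'def, Matrix.submatrix_apply]
      rw [hsub, charmatrix_apply_eq, hB₁col 0, if_pos rfl, mul_one]
      simp
    -- count roots
    have hroots : B₁.charpoly.roots = θ ::ₘ B'.charpoly.roots := by
      rw [hfact, Polynomial.roots_mul (mul_ne_zero (Polynomial.X_sub_C_ne_zero θ)
        (B'.charpoly_monic.ne_zero)), Polynomial.roots_X_sub_C]
      rfl
    obtain ⟨m', hm'⟩ : ∃ m', m = m' + 1 := ⟨m - 1, by omega⟩
    subst hm'
    have hcard' : (B'.charpoly.roots.filter fun z : ℂ => 0 ≤ z.re).card = m' := by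
      have : (B.charpoly.roots.filter fun z : ℂ => 0 ≤ z.re)
          = θ ::ₘ (B'.charpoly.roots.filter fun z : ℂ => 0 ≤ z.re) := by
        rw [← hchar₁, hroots, Multiset.filter_cons, if_pos hθre]
        rfl
      rw [this] at hm
      simp at hm
      omega
    obtain ⟨W', hW'orth, hW'tr⟩ := ih B' m' hcard'
    -- assemble
    set W₁ : Matrix (Fin (j+1)) (Fin (m'+1)) ℂ :=
      Matrix.of (Fin.cons (fun b => if b = 0 then 1 else 0)
        (fun a' => Fin.cons 0 (fun b' => W' a' b'))) with hW₁def
    have hW₁_00 : ∀ b, W₁ 0 b = if b = 0 then 1 else 0 := fun b => by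
      simp [hW₁def, Matrix.of_apply]
    have hW₁_s0 : ∀ a' : Fin j, W₁ a'.succ 0 = 0 := fun a' => by
      simp [hW₁def, Matrix.of_apply]
    have hW₁_ss : ∀ (a' : Fin j) (b' : Fin m'), W₁ a'.succ b'.succ = W' a' b' := fun a' b' => by
      simp [hW₁def, Matrix.of_apply]
    set W : Matrix (Fin (j+1)) (Fin (m'+1)) ℂ := U * W₁ with hWdef
    have hWBW : Wᴴ * B * W = W₁ᴴ * B₁ * W₁ := by
      rw [hWdef, Matrix.conjTranspose_mul, hB₁def]
      simp only [Matrix.mul_assoc]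
    have hW₁orth : W₁ᴴ * W₁ = 1 := by
      apply Matrix.ext; intro b c
      rw [Matrix.mul_apply, Fin.sum_univ_succ]
      simp only [Matrix.conjTranspose_apply]
      induction b using Fin.cases with
      | zero =>
        induction c using Fin.cases with
        | zero => simp [hW₁_00, hW₁_s0, Matrix.one_apply]
        | succ c' => simp [hW₁_00, hW₁_s0, hW₁_ss, Matrix.one_apply, Fin.succ_ne_zero, (Fin.succ_ne_zero c').symm]
      | succ b' =>
        induction c using Fin.cases with
        | zero => simp [hW₁_00, hW₁_s0, hW₁_ss, Matrix.one_apply, Fin.succ_ne_zero b']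
        | succ c' =>
          have := congrFun (congrFun hW'orth b') c'
          rw [Matrix.mul_apply] at this
          simp only [Matrix.conjTranspose_apply] at this
          simp only [hW₁_00, hW₁_ss, hW₁_s0, star_zero, zero_mul, zero_add,
            if_neg (Fin.succ_ne_zero c'), mul_zero, this]
          rw [Matrix.one_apply, Matrix.one_apply]
          simp [Fin.succ_inj]
    have hWorth : Wᴴ * W = 1 := by
      rw [hWdef, Matrix.conjTranspose_mul, Matrix.mul_assoc, ← Matrix.mul_assoc Uᴴ, hUU,
        Matrix.one_mul, hW₁orth]
    -- trace computation
    have htr : Matrix.trace (W₁ᴴ * B₁ * W₁) = θ + Matrix.trace (W'ᴴ * B' * W') := by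
      rw [Matrix.trace, Matrix.trace]
      simp only [Matrix.diag_apply]
      rw [Fin.sum_univ_succ]
      congr 1
      · -- diagonal entry 0
        rw [Matrix.mul_apply]
        rw [Fin.sum_univ_succ]
        simp only [Matrix.mul_apply, Matrix.conjTranspose_apply, Fin.sum_univ_succ]
        simp [hW₁_00, hW₁_s0, hW₁_ss, hB₁col]
      · apply Finset.sum_congr rfl
        intro c' _
        rw [Matrix.mul_apply, Fin.sum_univ_succ, Matrix.mul_apply, Fin.sum_univ_succ]
        simp only [Matrix.mul_apply, Matrix.conjTranspose_apply, Fin.sum_univ_succ,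
          hW₁_00, hW₁_s0, hW₁_ss, if_neg (Fin.succ_ne_zero c'), star_zero, zero_mul,
          mul_zero, zero_add, add_zero]
        simp [hB'def, Matrix.submatrix_apply]
    refine ⟨W, hWorth, ?_⟩
    rw [hWBW, htr, Complex.add_re]
    exact add_nonneg hθre hW'tr

lemma charpoly_diagonal_ofReal {k : ℕ} (d : Fin k → ℝ) :
    (Matrix.diagonal (fun i => (d i : ℂ))).charpoly = ∏ i, (X - C (d i : ℂ)) := by
  unfold Matrix.charpoly
  have : charmatrix (Matrix.diagonal (fun i => (d i : ℂ)))
      = Matrix.diagonal (fun i => (X - C (d i : ℂ))) := by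
    apply Matrix.ext; intro i j
    by_cases h : i = j
    · subst h; simp
    · rw [charmatrix_apply_ne _ _ _ h, Matrix.diagonal_apply_ne _ h, diagonal_apply_ne _ h, neg_eq_zero]; exact map_zero C
  rw [this, det_diagonal]

lemma kyfan_comb {n m : ℕ} (hm : m ≤ n) (μ w : Fin n → ℝ) (hμ : Antitone μ)
    (hw0 : ∀ i, 0 ≤ w i) (hw1 : ∀ i, w i ≤ 1) (hsum : ∑ i, w i = (m : ℝ)) :
    ∑ i, μ i * w i ≤ ∑ i : Fin m, μ (Fin.castLE hm i) := by
  set S : Finset (Fin n) := Finset.univ.filter (fun i : Fin n => (i:ℕ) < m) with hSdef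
  have hS : S = Finset.map (Fin.castLEEmb hm) Finset.univ := by
    ext a
    simp only [hSdef, Finset.mem_filter, Finset.mem_univ, true_and, Finset.mem_map,
      Fin.castLEEmb, Fin.castLE]
    constructor
    · intro h; exact ⟨⟨(a:ℕ), h⟩, by simp⟩
    · rintro ⟨b, _, rfl⟩; exact b.2
  have hsumS : ∑ i ∈ S, μ i = ∑ i : Fin m, μ (Fin.castLE hm i) := by
    rw [hS, Finset.sum_map]; rfl
  have hcardS : S.card = m := by rw [hS, Finset.card_map, Finset.card_univ, Fintype.card_fin]
  rcases eq_or_lt_of_le hm with heq | hlt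
  · -- m = n : all weights are 1
    subst heq
    have hall : ∀ i, w i = 1 := by
      by_contra hcon
      push_neg at hcon
      obtain ⟨i0, hi0⟩ := hcon
      have : ∑ i, w i < ∑ i : Fin m, (1:ℝ) :=
        Finset.sum_lt_sum (fun i _ => hw1 i) ⟨i0, Finset.mem_univ _, lt_of_le_of_ne (hw1 i0) hi0⟩
      simp [hsum] at this
    have hSall : S = Finset.univ := by
      ext a; simp [hSdef, a.2]
    refine le_of_eq ?_
    calc ∑ i, μ i * w i = ∑ i, μ i := by
          apply Finset.sum_congr rfl; intro i _; rw [hall i, mul_one]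
      _ = ∑ i ∈ S, μ i := by rw [hSall]
      _ = _ := hsumS
  · set t : ℝ := μ ⟨m, hlt⟩ with ht
    have key : ∀ i : Fin n, μ i * w i ≤ (if (i:ℕ) < m then μ i - t else 0) + t * w i := by
      intro i
      by_cases h : (i:ℕ) < m
      · rw [if_pos h]
        have hμi : t ≤ μ i := hμ (by rw [Fin.le_def]; exact le_of_lt h)
        nlinarith [hw1 i, hw0 i]
      · rw [if_neg h]
        have hμi : μ i ≤ t := hμ (by rw [Fin.le_def]; simpa using le_of_not_gt h)
        nlinarith [hw0 i]
    calc ∑ i, μ i * w i ≤ ∑ i : Fin n, ((if (i:ℕ) < m then μ i - t else 0) + t * w i) :=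
          Finset.sum_le_sum (fun i _ => key i)
      _ = (∑ i ∈ S, (μ i - t)) + t * ∑ i, w i := by
          rw [Finset.sum_add_distrib, ← Finset.sum_filter, Finset.mul_sum]
      _ = (∑ i ∈ S, μ i) - m * t + t * m := by
          rw [Finset.sum_sub_distrib, Finset.sum_const, hcardS, hsum]; ring
      _ = ∑ i ∈ S, μ i := by ring
      _ = _ := hsumS

lemma weights_of_isometry {n m : ℕ} (Y : Matrix (Fin n) (Fin m) ℂ) (hY : Yᴴ * Y = 1) :
    ∀ i, ((Y * Yᴴ) i i).re ≤ 1 ∧ 0 ≤ ((Y * Yᴴ) i i).re ∧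
      ((Y * Yᴴ) i i) = (((Y * Yᴴ) i i).re : ℂ) := by
  have hdiag : ∀ i, (Y * Yᴴ) i i = ((∑ b, Complex.normSq (Y i b) : ℝ) : ℂ) := by
    intro i
    rw [Matrix.mul_apply]
    push_cast
    apply Finset.sum_congr rfl
    intro b _
    rw [Matrix.conjTranspose_apply, ← Complex.mul_conj]
    rfl
  intro i
  have hre : ((Y * Yᴴ) i i).re = ∑ b, Complex.normSq (Y i b) := by
    rw [hdiag i, Complex.ofReal_re]
  refine ⟨?_, ?_, ?_⟩
  · -- ≤ 1 via P = 1 - Y Yᴴ being hermitian idempotent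
    set P : Matrix (Fin n) (Fin n) ℂ := 1 - Y * Yᴴ with hP
    have hPherm : Pᴴ = P := by
      rw [hP, Matrix.conjTranspose_sub, Matrix.conjTranspose_one, Matrix.conjTranspose_mul,
        Matrix.conjTranspose_conjTranspose]
    have hPidem : P * P = P := by
      rw [hP]
      rw [Matrix.sub_mul, Matrix.mul_sub, Matrix.mul_sub, Matrix.one_mul, Matrix.mul_one,
        Matrix.mul_assoc, ← Matrix.mul_assoc Yᴴ, hY, Matrix.one_mul, Matrix.one_mul]
      abel
    have hPdiag : 0 ≤ (P i i).re := by
      have : P i i = (Pᴴ * P) i i := by rw [hPherm, hPidem]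
      rw [this, Matrix.mul_apply]
      rw [Complex.re_sum]
      apply Finset.sum_nonneg
      intro b _
      rw [Matrix.conjTranspose_apply]
      have : (star (P b i)) * P b i = ((Complex.normSq (P b i) : ℝ) : ℂ) := by
        rw [mul_comm, ← Complex.mul_conj]; rfl
      rw [this, Complex.ofReal_re]
      exact Complex.normSq_nonneg _
    have : (P i i).re = 1 - ((Y * Yᴴ) i i).re := by
      rw [hP]; simp [Matrix.sub_apply, Matrix.one_apply]
    linarith [hPdiag, this.symm.le]
  · rw [hre]; exact Finset.sum_nonneg fun b _ => Complex.normSq_nonneg _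
  · rw [hdiag i, Complex.ofReal_re]

lemma sum_weights {n m : ℕ} (Y : Matrix (Fin n) (Fin m) ℂ) (hY : Yᴴ * Y = 1) :
    ∑ i, ((Y * Yᴴ) i i).re = (m : ℝ) := by
  have h1 : Matrix.trace (Y * Yᴴ) = Matrix.trace (Yᴴ * Y) := Matrix.trace_mul_comm Y Yᴴ
  rw [hY, Matrix.trace_one] at h1
  have : (Matrix.trace (Y * Yᴴ)).re = (m : ℝ) := by
    rw [h1]; simp
  rw [← this, Matrix.trace, Complex.re_sum]
  rfl

lemma kyfan_trace {n m : ℕ} (hm : m ≤ n) (Hm : Matrix (Fin n) (Fin n) ℂ)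
    (hHerm : Hm.IsHermitian) (μ : Fin n → ℝ) (hμ : Antitone μ) (σ : Equiv.Perm (Fin n))
    (hσ : ∀ i, hHerm.eigenvalues i = μ (σ i))
    (X : Matrix (Fin n) (Fin m) ℂ) (hX : Xᴴ * X = 1) :
    (Matrix.trace (Xᴴ * Hm * X)).re ≤ ∑ i : Fin m, μ (Fin.castLE hm i) := by
  set U : Matrix (Fin n) (Fin n) ℂ := (hHerm.eigenvectorUnitary : Matrix (Fin n) (Fin n) ℂ)
    with hUdef
  have hU1 : Uᴴ * U = 1 := by
    rw [← Matrix.star_eq_conjTranspose]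
    exact (Matrix.mem_unitaryGroup_iff').mp hHerm.eigenvectorUnitary.2
  have hU2 : U * Uᴴ = 1 := mul_eq_one_comm.mp hU1
  set Y : Matrix (Fin n) (Fin m) ℂ := Uᴴ * X with hYdef
  have hYY : Yᴴ * Y = 1 := by
    rw [hYdef, Matrix.conjTranspose_mul, Matrix.conjTranspose_conjTranspose,
      Matrix.mul_assoc, ← Matrix.mul_assoc U, hU2, Matrix.one_mul, hX]
  set D : Matrix (Fin n) (Fin n) ℂ :=
    Matrix.diagonal (RCLike.ofReal ∘ hHerm.eigenvalues) with hDdef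
  have hspec : Hm = U * D * Uᴴ := by
    rw [← Matrix.star_eq_conjTranspose]
    exact hHerm.spectral_theorem
  have htr : Matrix.trace (Xᴴ * Hm * X) = Matrix.trace (D * (Y * Yᴴ)) := by
    rw [hspec]
    have h1 : Xᴴ * (U * D * Uᴴ) * X = Yᴴ * (D * Y) := by
      rw [hYdef, Matrix.conjTranspose_mul, Matrix.conjTranspose_conjTranspose]
      simp only [Matrix.mul_assoc]
    rw [h1, Matrix.trace_mul_comm, Matrix.mul_assoc]
  set w : Fin n → ℝ := fun i => ((Y * Yᴴ) i i).re with hwdef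
  have hweights := weights_of_isometry Y hYY
  have hre : (Matrix.trace (Xᴴ * Hm * X)).re = ∑ i, hHerm.eigenvalues i * w i := by
    rw [htr, Matrix.trace, Complex.re_sum]
    apply Finset.sum_congr rfl
    intro i _
    rw [Matrix.diag_apply, Matrix.diagonal_mul, (hweights i).2.2]
    simp [hwdef]
  rw [hre]
  have hperm : ∑ i, hHerm.eigenvalues i * w i = ∑ j, μ j * w (σ.symm j) := by
    rw [← Equiv.sum_comp σ (fun j => μ j * w (σ.symm j))]
    apply Finset.sum_congr rfl
    intro i _
    simp [hσ i]
  rw [hperm]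
  apply kyfan_comb hm μ (fun j => w (σ.symm j)) hμ
    (fun j => (hweights (σ.symm j)).2.1) (fun j => (hweights (σ.symm j)).1)
  rw [Equiv.sum_comp σ.symm w]
  exact sum_weights Y hYY

lemma multiset_map_perm {n : ℕ} (f : Fin n → ℝ) (e : Equiv.Perm (Fin n)) :
    Finset.univ.val.map (f ∘ e) = Finset.univ.val.map f := by
  have h1 : Finset.univ.val.map (e : Fin n → Fin n) = Finset.univ.val := by
    have := congrArg Finset.val (Finset.map_univ_equiv e)
    rwa [Finset.map_val] at this
  rw [← Multiset.map_map, h1]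

lemma exists_perm_eigenvalues {n : ℕ} (Hm : Matrix (Fin n) (Fin n) ℂ) (hHerm : Hm.IsHermitian)
    (μ : Fin n → ℝ) (hμ : Antitone μ)
    (hchar : Hm.charpoly = ∏ i, (X - C (μ i : ℂ))) :
    ∃ σ : Equiv.Perm (Fin n), ∀ i, hHerm.eigenvalues i = μ (σ i) := by
  -- charpoly of Hm in terms of eigenvalues
  have hUU : (hHerm.eigenvectorUnitary : Matrix (Fin n) (Fin n) ℂ)ᴴ *
      (hHerm.eigenvectorUnitary : Matrix (Fin n) (Fin n) ℂ) = 1 := by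
    rw [← Matrix.star_eq_conjTranspose]
    exact (Matrix.mem_unitaryGroup_iff').mp hHerm.eigenvectorUnitary.2
  have hU2 : (hHerm.eigenvectorUnitary : Matrix (Fin n) (Fin n) ℂ) *
      (hHerm.eigenvectorUnitary : Matrix (Fin n) (Fin n) ℂ)ᴴ = 1 := mul_eq_one_comm.mp hUU
  have hchar2 : Hm.charpoly = ∏ i, (X - C (hHerm.eigenvalues i : ℂ)) := by
    have hspec : Hm = ((hHerm.eigenvectorUnitary : Matrix (Fin n) (Fin n) ℂ)ᴴ)ᴴ *
        Matrix.diagonal (fun i => (hHerm.eigenvalues i : ℂ)) *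
        (hHerm.eigenvectorUnitary : Matrix (Fin n) (Fin n) ℂ)ᴴ := by
      rw [Matrix.conjTranspose_conjTranspose, ← Matrix.star_eq_conjTranspose]
      exact hHerm.spectral_theorem
    have h3 := charpoly_unitary_conj ((hHerm.eigenvectorUnitary : Matrix (Fin n) (Fin n) ℂ)ᴴ)
      (Matrix.diagonal (fun i => (hHerm.eigenvalues i : ℂ)))
      (by rw [Matrix.conjTranspose_conjTranspose]; exact hU2)
    rw [← hspec] at h3
    rw [h3, charpoly_diagonal_ofReal]
  -- multiset equality
  have hms : Finset.univ.val.map (fun i => (hHerm.eigenvalues i : ℂ))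
      = Finset.univ.val.map (fun i => (μ i : ℂ)) := by
    have h1 : ∀ f : Fin n → ℝ, (∏ i, (X - C (f i : ℂ))).roots
        = Finset.univ.val.map (fun i => (f i : ℂ)) := by
      intro f
      have hcomp : (fun i : Fin n => X - C (f i : ℂ)) = (fun a : ℂ => X - C a) ∘ (fun i => (f i : ℂ)) := rfl
      rw [Finset.prod_eq_multiset_prod, hcomp, ← Multiset.map_map,
        Polynomial.roots_multiset_prod_X_sub_C]
    rw [← h1, ← h1, ← hchar2, ← hchar]
  have hmsR : Finset.univ.val.map hHerm.eigenvalues = Finset.univ.val.map μ := by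
    apply Multiset.map_injective (Complex.ofReal_injective)
    rw [Multiset.map_map, Multiset.map_map]
    exact hms
  -- sort both
  set τ : Equiv.Perm (Fin n) := Tuple.sort hHerm.eigenvalues with hτ
  have hmono1 : Monotone (hHerm.eigenvalues ∘ τ) := Tuple.monotone_sort _
  have hmono2 : Monotone (μ ∘ Fin.revPerm) := by
    intro a b hab
    exact hμ (by simpa using Fin.rev_le_rev.mpr hab)
  have hlist : List.ofFn (hHerm.eigenvalues ∘ τ) = List.ofFn (μ ∘ Fin.revPerm) := by
    refine (fun hp h1 h2 => List.Perm.eq_of_sortedLE h1 h2 hp) ?_ ?_ ?_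
    · rw [← Multiset.coe_eq_coe, ← Fin.univ_val_map, ← Fin.univ_val_map,
        multiset_map_perm, multiset_map_perm]
      exact hmsR
    · exact List.sortedLE_ofFn_iff.mpr hmono1
    · exact List.sortedLE_ofFn_iff.mpr hmono2
  have hfun : hHerm.eigenvalues ∘ τ = μ ∘ Fin.revPerm := List.ofFn_injective hlist
  refine ⟨τ.symm.trans Fin.revPerm, fun i => ?_⟩
  have := congrFun hfun (τ.symm i)
  simpa using this

/-- Upper bound on the number of unstable modes of an orthogonal-projection ROM
(continuous time): at most p eigenvalues of V*AV have nonnegative real part,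
where p is the largest j such that the mean of the j largest eigenvalues of the
Hermitian part of A is nonnegative. -/
theorem card_unstable_modes_le_continuous
    {n k : ℕ} (hkn : k ≤ n) (A : Matrix (Fin n) (Fin n) ℂ)
    (H : Matrix (Fin n) (Fin n) ℂ) (hH : H = (1/2 : ℂ) • (A + Aᴴ))
    (μ : Fin n → ℝ) (hμ : Antitone μ)
    (hcharH : H.charpoly = ∏ i : Fin n, (X - C (μ i : ℂ)))
    (p : ℕ) (hpn : p ≤ n)
    (hppos : ∀ j : ℕ, (hj : j ≤ n) → 1 ≤ j → j ≤ p →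
      0 ≤ (∑ i : Fin j, μ (Fin.castLE hj i)) / j)
    (hpneg : ∀ j : ℕ, (hj : j ≤ n) → p < j →
      (∑ i : Fin j, μ (Fin.castLE hj i)) / j < 0)
    (V : Matrix (Fin n) (Fin k) ℂ) (hV : Vᴴ * V = 1) :
    (((Vᴴ * A * V).charpoly.roots.filter fun z : ℂ => 0 ≤ z.re)).card ≤ p := by
  set B : Matrix (Fin k) (Fin k) ℂ := Vᴴ * A * V with hBdef
  set m : ℕ := ((B.charpoly.roots.filter fun z : ℂ => 0 ≤ z.re)).card with hmdef
  show m ≤ p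
  have hmk : m ≤ k := by
    calc m ≤ Multiset.card B.charpoly.roots :=
          Multiset.card_le_card (Multiset.filter_le _ _)
      _ ≤ B.charpoly.natDegree := Polynomial.card_roots' _
      _ = k := by rw [B.charpoly_natDegree_eq_dim, Fintype.card_fin]
  have hmn : m ≤ n := le_trans hmk hkn
  obtain ⟨W, hW1, htrW⟩ := key_lemma k B m rfl
  set X : Matrix (Fin n) (Fin m) ℂ := V * W with hXdef
  have hX1 : Xᴴ * X = 1 := by
    rw [hXdef, Matrix.conjTranspose_mul, Matrix.mul_assoc, ← Matrix.mul_assoc Vᴴ, hV,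
      Matrix.one_mul, hW1]
  have hHerm : H.IsHermitian := by
    show Hᴴ = H
    rw [hH, Matrix.conjTranspose_smul, Matrix.conjTranspose_add,
      Matrix.conjTranspose_conjTranspose]
    rw [add_comm]
    congr 1
    simp
  obtain ⟨σ, hσ⟩ := exists_perm_eigenvalues H hHerm μ hμ hcharH
  have hKF := kyfan_trace hmn H hHerm μ hμ σ hσ X hX1
  -- real part of trace
  have htr_eq : (Matrix.trace (Xᴴ * H * X)).re = (Matrix.trace (Xᴴ * A * X)).re := by
    have h1 : Xᴴ * H * X = (1/2 : ℂ) • (Xᴴ * A * X + Xᴴ * Aᴴ * X) := by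
      rw [hH]
      simp only [Matrix.mul_smul, Matrix.smul_mul, Matrix.mul_add, Matrix.add_mul]
    have h2 : Xᴴ * Aᴴ * X = (Xᴴ * A * X)ᴴ := by
      simp only [Matrix.conjTranspose_mul, Matrix.conjTranspose_conjTranspose,
        Matrix.mul_assoc]
    rw [h1, h2, Matrix.trace_smul, Matrix.trace_add, Matrix.trace_conjTranspose]
    simp [Complex.add_re, Complex.smul_re]
    ring
  have hXA : Xᴴ * A * X = Wᴴ * B * W := by
    rw [hXdef, hBdef, Matrix.conjTranspose_mul]
    simp only [Matrix.mul_assoc]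
  have h0 : (0:ℝ) ≤ ∑ i : Fin m, μ (Fin.castLE hmn i) := by
    calc (0:ℝ) ≤ (Matrix.trace (Wᴴ * B * W)).re := htrW
      _ = (Matrix.trace (Xᴴ * H * X)).re := by rw [htr_eq, hXA]
      _ ≤ _ := hKF
  by_contra hcon
  push_neg at hcon
  have hm1 : 1 ≤ m := by omega
  have := hpneg m hmn hcon
  have hdivpos : (0:ℝ) < (m:ℝ) := by exact_mod_cast hm1
  have : (∑ i : Fin m, μ (Fin.castLE hmn i)) < 0 := by
    by_contra hge
    push_neg at hge
    exact absurd (div_nonneg hge hdivpos.le) (not_le.mpr this)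
  linarith
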